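/- The multiplication on the strand algebra A(n,k) over Z/2 is associative. -/

import Mathlib

open Finset

/-- A strand map with `k` strands on `n` places: subsets `src, tgt ⊆ {1,…,n}` of size `k`
and a non-decreasing bijection `φ : src → tgt`. -/
structure StrandMap (n k : ℕ) where
  src : Finset (Fin n)
  tgt : Finset (Fin n)
  card_src : src.card = k
  card_tgt : tgt.card = k
  φ : {x // x ∈ src} → {x // x ∈ tgt}
  bij : Function.Bijective φ
  nondecr : ∀ i, i.1 ≤ (φ i).1

/-- The number of inversions of a strand map: pairs `i < j` with `φ i > φ j`. -/
def invCount {n k : ℕ} (μ : StrandMap n k) : ℕ :=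
  (univ.filter fun p : {x // x ∈ μ.src} × {x // x ∈ μ.src} =>
    (p.1 : Fin n) < (p.2 : Fin n) ∧ (μ.φ p.2 : Fin n) < (μ.φ p.1 : Fin n)).card

/-- Composition of strand maps, defined when the target of `μ` equals the source of `ν`. -/
def strandComp {n k : ℕ} (μ ν : StrandMap n k) (h : μ.tgt = ν.src) : StrandMap n k where
  src := μ.src
  tgt := ν.tgt
  card_src := μ.card_src
  card_tgt := ν.card_tgt
  φ := fun i => ν.φ ⟨(μ.φ i).1, h ▸ (μ.φ i).2⟩
  bij := by
    constructor
    · intro a b hab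
      have h1 := congrArg Subtype.val (ν.bij.1 hab)
      exact μ.bij.1 (Subtype.ext h1)
    · intro y
      obtain ⟨z, hz⟩ := ν.bij.2 y
      obtain ⟨x, hx⟩ := μ.bij.2 ⟨z.1, h.symm ▸ z.2⟩
      refine ⟨x, ?_⟩
      show ν.φ _ = y
      rw [← hz]
      congr 1
      have h1 := congrArg Subtype.val hx
      exact Subtype.ext h1
  nondecr := fun i => le_trans (μ.nondecr i) (ν.nondecr ⟨(μ.φ i).1, h ▸ (μ.φ i).2⟩)

/-- The strand algebra `A(n,k)` over `Z/2`: the free `Z/2`-module on strand maps. -/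
abbrev StrandAlgebra (n k : ℕ) := StrandMap n k →₀ ZMod 2

/-- Product of two basis strand maps: their composition when the targets/sources match and
there are no excess inversions (`inv(ψ∘ϕ) = inv(ϕ) + inv(ψ)`); otherwise `0`. -/
noncomputable def strandMulBasis {n k : ℕ} (μ ν : StrandMap n k) : StrandAlgebra n k :=
  if h : μ.tgt = ν.src then
    if invCount (strandComp μ ν h) = invCount μ + invCount ν then
      Finsupp.single (strandComp μ ν h) 1
    else 0
  else 0

/-- Multiplication on the strand algebra, the bilinear extension of `strandMulBasis`. -/
noncomputable def strandMul {n k : ℕ} (x y : StrandAlgebra n k) : StrandAlgebra n k :=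
  x.sum fun μ a => y.sum fun ν b => (a * b) • strandMulBasis μ ν

/-- The idempotent strand map `I(S) = (S, S, id)`. -/
def idemStrand (n k : ℕ) (S : Finset (Fin n)) (h : S.card = k) : StrandMap n k :=
  ⟨S, S, h, h, id, Function.bijective_id, fun i => le_refl _⟩

/-!
Inversions are subadditive under composition: an inversion of `ψ ∘ ϕ` is either an inversion
of `ϕ` or is carried by `ϕ` onto an inversion of `ψ`. Hence, for composable `ϕ, ψ, χ`, either
bracketing of the product of the three basis elements is nonzero exactly when
`inv(χ ∘ ψ ∘ ϕ) = inv ϕ + inv ψ + inv χ`, since an excess created by the inner product can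
never be cancelled by the outer one. Associativity on basis elements then extends trilinearly.
-/

section Inversions

variable {α β γ : Type*} [Fintype α] [LT α] [DecidableRel (α := α) (· < ·)]

def inversions [LT β] [DecidableRel (α := β) (· < ·)] (f : α → β) : Finset (α × α) :=
  {p | p.1 < p.2 ∧ f p.2 < f p.1}

theorem card_inversions_comp_le [Fintype β] [LinearOrder β] [Preorder γ]
    [DecidableRel (α := γ) (· < ·)] {f : α → β} (hf : Function.Injective f) (g : β → γ) :
    #(inversions (g ∘ f)) ≤ #(inversions f) + #(inversions g) := by
  -- an inversion of `g ∘ f` is an inversion of `f`, or `f` maps it to an inversion of `g`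
  have hf_inv : #{p ∈ inversions (g ∘ f) | ¬f p.1 < f p.2} ≤ #(inversions f) := by
    refine card_le_card fun p hp => ?_
    simp only [inversions, mem_filter, mem_univ, true_and, Function.comp_apply, not_lt] at hp ⊢
    refine ⟨hp.1.1, hp.2.lt_of_ne fun heq => ?_⟩
    exact lt_irrefl _ (heq ▸ hp.1.2)
  have hg_inv : #{p ∈ inversions (g ∘ f) | f p.1 < f p.2} ≤ #(inversions g) := by
    refine card_le_card_of_injOn (Prod.map f f) (fun p hp => ?_) (hf.prodMap hf).injOn
    simp only [inversions, coe_filter, mem_filter, mem_univ, true_and, Set.mem_ofPred_eq,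
      Function.comp_apply] at hp ⊢
    exact ⟨hp.2, hp.1.2⟩
  rw [← card_filter_add_card_filter_not (s := inversions (g ∘ f)) (fun p => f p.1 < f p.2)]
  omega

end Inversions

section StrandProduct

variable {n k : ℕ}

theorem strandComp_assoc (μ ν χ : StrandMap n k) (h₁ : μ.tgt = ν.src) (h₂ : ν.tgt = χ.src) :
    strandComp (strandComp μ ν h₁) χ h₂ = strandComp μ (strandComp ν χ h₂) h₁ :=
  rfl

theorem invCount_strandComp_le (μ ν : StrandMap n k) (h : μ.tgt = ν.src) :
    invCount (strandComp μ ν h) ≤ invCount μ + invCount ν :=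
  card_inversions_comp_le (f := fun i => (⟨(μ.φ i).1, h ▸ (μ.φ i).2⟩ : {x // x ∈ ν.src}))
    (fun _ _ hij => μ.bij.1 (Subtype.ext (Subtype.mk.inj hij))) (fun j => (ν.φ j : Fin n))

/-- The product of two basis strand maps, with `none` standing for `0`. -/
def strandProd (μ ν : StrandMap n k) : Option (StrandMap n k) :=
  if h : μ.tgt = ν.src then
    if invCount (strandComp μ ν h) = invCount μ + invCount ν then some (strandComp μ ν h)
    else none
  else none

def strandTripleProd (μ ν χ : StrandMap n k) : Option (StrandMap n k) :=
  if h : μ.tgt = ν.src ∧ ν.tgt = χ.src then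
    if invCount (strandComp (strandComp μ ν h.1) χ h.2) = invCount μ + invCount ν + invCount χ
    then some (strandComp (strandComp μ ν h.1) χ h.2)
    else none
  else none

theorem strandProd_of_tgt_ne {μ ν : StrandMap n k} (h : μ.tgt ≠ ν.src) :
    strandProd μ ν = none :=
  dif_neg h

theorem strandProd_of_tgt_eq {μ ν : StrandMap n k} (h : μ.tgt = ν.src) :
    strandProd μ ν = if invCount (strandComp μ ν h) = invCount μ + invCount ν
      then some (strandComp μ ν h) else none :=
  dif_pos h

theorem strandProd_bind_left (μ ν χ : StrandMap n k) :
    (strandProd μ ν).bind (strandProd · χ) = strandTripleProd μ ν χ := by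
  by_cases h₁ : μ.tgt = ν.src
  swap
  · simp [strandProd_of_tgt_ne h₁, strandTripleProd, h₁]
  by_cases h₂ : ν.tgt = χ.src
  swap
  · rw [strandTripleProd, dif_neg (by tauto), strandProd_of_tgt_eq h₁]
    split_ifs
    exacts [strandProd_of_tgt_ne h₂, rfl]
  have := invCount_strandComp_le μ ν h₁
  have := invCount_strandComp_le (strandComp μ ν h₁) χ h₂
  rw [strandTripleProd, dif_pos ⟨h₁, h₂⟩, strandProd_of_tgt_eq h₁]
  by_cases hi : invCount (strandComp μ ν h₁) = invCount μ + invCount ν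
  · rw [if_pos hi, Option.bind_some, strandProd_of_tgt_eq (μ := strandComp μ ν h₁) h₂, hi]
  · rw [if_neg hi, Option.bind_none, if_neg (by omega)]

theorem strandProd_bind_right (μ ν χ : StrandMap n k) :
    (strandProd ν χ).bind (strandProd μ ·) = strandTripleProd μ ν χ := by
  by_cases h₂ : ν.tgt = χ.src
  swap
  · simp [strandProd_of_tgt_ne h₂, strandTripleProd, h₂]
  by_cases h₁ : μ.tgt = ν.src
  swap
  · rw [strandTripleProd, dif_neg (by tauto), strandProd_of_tgt_eq h₂]
    split_ifs
    exacts [strandProd_of_tgt_ne h₁, rfl]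
  have := invCount_strandComp_le ν χ h₂
  have := invCount_strandComp_le μ (strandComp ν χ h₂) h₁
  rw [strandTripleProd, dif_pos ⟨h₁, h₂⟩, strandComp_assoc, strandProd_of_tgt_eq h₂]
  by_cases hi : invCount (strandComp ν χ h₂) = invCount ν + invCount χ
  · rw [if_pos hi, Option.bind_some, strandProd_of_tgt_eq (ν := strandComp ν χ h₂) h₁, hi,
      add_assoc]
  · rw [if_neg hi, Option.bind_none, if_neg (by omega)]

theorem strandMulBasis_eq_elim (μ ν : StrandMap n k) :
    strandMulBasis μ ν = (strandProd μ ν).elim 0 (Finsupp.single · 1) := by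
  unfold strandMulBasis strandProd
  split_ifs <;> rfl

end StrandProduct

section StrandAlgebra

variable {n k : ℕ}

noncomputable def strandMulₗ :
    StrandAlgebra n k →ₗ[ZMod 2] StrandAlgebra n k →ₗ[ZMod 2] StrandAlgebra n k :=
  Finsupp.linearCombination (ZMod 2) fun μ => Finsupp.linearCombination (ZMod 2) (strandMulBasis μ)

theorem strandMul_eq_strandMulₗ (x y : StrandAlgebra n k) : strandMul x y = strandMulₗ x y := by
  simp only [strandMul, strandMulₗ, Finsupp.linearCombination_apply, Finsupp.sum,
    LinearMap.sum_apply, LinearMap.smul_apply, Finset.smul_sum, mul_smul]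

theorem strandMulₗ_single_single (μ ν : StrandMap n k) (a b : ZMod 2) :
    strandMulₗ (Finsupp.single μ a) (Finsupp.single ν b) = (a * b) • strandMulBasis μ ν := by
  simp [strandMulₗ, Finsupp.linearCombination_single, mul_smul]

theorem strandMulₗ_strandMulBasis_single (μ ν χ : StrandMap n k) :
    strandMulₗ (strandMulBasis μ ν) (Finsupp.single χ 1) =
      ((strandProd μ ν).bind (strandProd · χ)).elim 0 (Finsupp.single · 1) := by
  rw [strandMulBasis_eq_elim]
  cases strandProd μ ν <;> simp [strandMulₗ_single_single, strandMulBasis_eq_elim]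

theorem strandMulₗ_single_strandMulBasis (μ ν χ : StrandMap n k) :
    strandMulₗ (Finsupp.single μ 1) (strandMulBasis ν χ) =
      ((strandProd ν χ).bind (strandProd μ ·)).elim 0 (Finsupp.single · 1) := by
  rw [strandMulBasis_eq_elim]
  cases strandProd ν χ <;> simp [strandMulₗ_single_single, strandMulBasis_eq_elim]

theorem strandMulₗ_strandMulBasis_assoc (μ ν χ : StrandMap n k) :
    strandMulₗ (strandMulBasis μ ν) (Finsupp.single χ 1) =
      strandMulₗ (Finsupp.single μ 1) (strandMulBasis ν χ) := by
  rw [strandMulₗ_strandMulBasis_single, strandMulₗ_single_strandMulBasis, strandProd_bind_left,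
    strandProd_bind_right]

theorem strandMulₗ_single_assoc (μ ν χ : StrandMap n k) (a b c : ZMod 2) :
    strandMulₗ (strandMulₗ (Finsupp.single μ a) (Finsupp.single ν b)) (Finsupp.single χ c) =
      strandMulₗ (Finsupp.single μ a) (strandMulₗ (Finsupp.single ν b) (Finsupp.single χ c)) := by
  rw [strandMulₗ_single_single, strandMulₗ_single_single, ← Finsupp.smul_single_one χ c,
    ← Finsupp.smul_single_one μ a]
  simp only [map_smul, LinearMap.smul_apply, strandMulₗ_strandMulBasis_assoc, smul_smul]
  congr 1
  ring

end StrandAlgebra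

/-- The multiplication on the strand algebra `A(n,k)` over `Z/2` is
associative. -/
theorem strandMul_assoc (n k : ℕ) (x y z : StrandAlgebra n k) :
    strandMul (strandMul x y) z = strandMul x (strandMul y z) := by
  simp only [strandMul_eq_strandMulₗ]
  induction x using Finsupp.induction_linear with
  | zero => simp
  | add x x' hx hx' => simp [hx, hx']
  | single μ a =>
    induction y using Finsupp.induction_linear with
    | zero => simp
    | add y y' hy hy' => simp [hy, hy']
    | single ν b =>
      induction z using Finsupp.induction_linear with
      | zero => simp
      | add z z' hz hz' => simp [hz, hz']
      | single χ c => exact strandMulₗ_single_assoc μ ν χ a b c
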